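/- Let n = 5/2, q = −4, k > 0, and let c ∈ ℝ. Fix a sign ε ∈ {1, −1} and define w(t,r) = ε·√k·(1 + c(3t + r²))·(3t/r + r). Then u(t,r) = w(t,r)^{1/2} is a positive solution of the semilinear radial heat equation u_t = u_rr + (3/2) r⁻¹ u_r + k u^{−3} on any open subset of {(t,r) : r > 0, w(t,r) > 0}. -/

import Mathlib

noncomputable section

def pdt (u : ℝ × ℝ → ℝ) (p : ℝ × ℝ) : ℝ := deriv (fun s => u (s, p.2)) p.1

def pdr (u : ℝ × ℝ → ℝ) (p : ℝ × ℝ) : ℝ := deriv (fun s => u (p.1, s)) p.2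

def pdrr (u : ℝ × ℝ → ℝ) (p : ℝ × ℝ) : ℝ :=
  deriv (fun s => deriv (fun s' => u (p.1, s')) s) p.2

/-- The semilinear radial heat equation for `n = 5/2`, `q = -4`:
`u_t = u_rr + (3/2) r⁻¹ u_r + k u^(-3)`. -/
def HeatEqM3 (k : ℝ) (u : ℝ × ℝ → ℝ) (p : ℝ × ℝ) : Prop :=
  pdt u p = pdrr u p + (3 / 2) * (p.2)⁻¹ * pdr u p + k * u p ^ (-3 : ℤ)


/-!
Substituting `u = w ^ (1/2)` turns `u_t = u_rr + (3/2) r⁻¹ u_r + k u⁻³` into the relation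
`2 w (w_t - w_rr - (3/2) r⁻¹ w_r) + w_r² = 4 k`. For
`w = s (1 + c (3t + r²)) (3t/r + r)` the left-hand side is identically `4 s²`, and `s = ε √k`
gives `s² = k`.
-/

open Filter Topology

theorem heatEqM3_rpow_half {k : ℝ} {w : ℝ × ℝ → ℝ} {p : ℝ × ℝ} {wt wrr : ℝ} {wr : ℝ → ℝ}
    (hwt : HasDerivAt (fun s => w (s, p.2)) wt p.1)
    (hwr : ∀ᶠ x in 𝓝 p.2, HasDerivAt (fun s => w (p.1, s)) (wr x) x)
    (hwrr : HasDerivAt wr wrr p.2) (hw : 0 < w p)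
    (hid : 2 * w p * (wt - wrr - 3 / 2 * p.2⁻¹ * wr p.2) + wr p.2 ^ 2 = 4 * k) :
    HeatEqM3 k (fun q => w q ^ (1 / 2 : ℝ)) p := by
  have hw_near : ∀ᶠ x in 𝓝 p.2, 0 < w (p.1, x) :=
    hwr.self_of_nhds.continuousAt.eventually (lt_mem_nhds hw)
  have hur : ∀ᶠ x in 𝓝 p.2, HasDerivAt (fun s => w (p.1, s) ^ (1 / 2 : ℝ))
      (wr x * (1 / 2) * w (p.1, x) ^ ((1 / 2 : ℝ) - 1)) x := by
    filter_upwards [hwr, hw_near] with x hx hx_pos using hx.rpow_const (Or.inl hx_pos.ne')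
  have hurr : HasDerivAt (fun x => wr x * (1 / 2) * w (p.1, x) ^ ((1 / 2 : ℝ) - 1))
      (wrr * (1 / 2) * w p ^ ((1 / 2 : ℝ) - 1)
        + wr p.2 * (1 / 2) * (wr p.2 * ((1 / 2 : ℝ) - 1) * w p ^ ((1 / 2 : ℝ) - 1 - 1))) p.2 :=
    (hwrr.mul_const _).mul (hwr.self_of_nhds.rpow_const (Or.inl hw.ne'))
  obtain ⟨t, r⟩ := p
  unfold HeatEqM3 pdt pdr pdrr
  dsimp only
  rw [(hwt.rpow_const (Or.inl hw.ne')).deriv, hur.self_of_nhds.deriv,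
    Filter.EventuallyEq.deriv_eq (hur.mono fun x hx => hx.deriv), hurr.deriv]
  set y := w (t, r) ^ (1 / 2 : ℝ)
  have hy : 0 < y := Real.rpow_pos_of_pos hw _
  have hy_sq : w (t, r) = y ^ 2 := by
    rw [← Real.rpow_natCast, ← Real.rpow_mul hw.le]; norm_num
  have h_neg_half : w (t, r) ^ ((1 / 2 : ℝ) - 1) = y⁻¹ := by
    rw [← Real.rpow_neg hw.le]; norm_num
  have h_neg_three_halves : w (t, r) ^ ((1 / 2 : ℝ) - 1 - 1) = (y ^ 3)⁻¹ := by
    rw [← Real.rpow_natCast, ← Real.rpow_mul hw.le, ← Real.rpow_neg hw.le]; norm_num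
  rw [h_neg_half, h_neg_three_halves, zpow_neg, zpow_ofNat]
  rw [hy_sq] at hid
  field_simp
  linear_combination hid

theorem hasDerivAt_const_div_add_self (a : ℝ) {x : ℝ} (hx : x ≠ 0) :
    HasDerivAt (fun y => a / y + y) (1 - a / x ^ 2) x := by
  refine (((hasDerivAt_const x a).div (hasDerivAt_id' x) hx).add
    (hasDerivAt_id' x)).congr_deriv ?_
  field_simp
  ring

theorem hasDerivAt_one_sub_const_div_sq (a : ℝ) {x : ℝ} (hx : x ≠ 0) :
    HasDerivAt (fun y => 1 - a / y ^ 2) (2 * a / x ^ 3) x := by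
  refine (((hasDerivAt_const x a).div (hasDerivAt_pow 2 x) (pow_ne_zero 2 hx)).const_sub
    1).congr_deriv ?_
  field_simp
  ring

theorem hasDerivAt_one_add_mul_add_sq (c a x : ℝ) :
    HasDerivAt (fun y => 1 + c * (a + y ^ 2)) (2 * c * x) x := by
  simpa [mul_comm, mul_left_comm] using ((hasDerivAt_pow 2 x).const_add a).const_mul c
    |>.const_add 1

def radialProfile (s c : ℝ) (p : ℝ × ℝ) : ℝ :=
  s * (1 + c * (3 * p.1 + p.2 ^ 2)) * (3 * p.1 / p.2 + p.2)

def radialProfileDerivSnd (s c t x : ℝ) : ℝ :=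
  s * (2 * c * x * (3 * t / x + x) + (1 + c * (3 * t + x ^ 2)) * (1 - 3 * t / x ^ 2))

theorem hasDerivAt_radialProfile_fst (s c t r : ℝ) :
    HasDerivAt (fun x => radialProfile s c (x, r))
      (3 * s * (c * (3 * t / r + r) + (1 + c * (3 * t + r ^ 2)) / r)) t := by
  have hg : HasDerivAt (fun x => 1 + c * (3 * x + r ^ 2)) (3 * c) t := by
    simpa [mul_comm] using (((hasDerivAt_id t).const_mul 3).add_const (r ^ 2)).const_mul c
      |>.const_add 1
  have hh : HasDerivAt (fun x => 3 * x / r + r) (3 / r) t := by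
    simpa using (((hasDerivAt_id t).const_mul 3).div_const r).add_const r
  exact ((hg.const_mul s).mul hh).congr_deriv (by ring)

theorem hasDerivAt_radialProfile_snd (s c t : ℝ) {x : ℝ} (hx : x ≠ 0) :
    HasDerivAt (fun y => radialProfile s c (t, y)) (radialProfileDerivSnd s c t x) x := by
  have hg := hasDerivAt_one_add_mul_add_sq c (3 * t) x
  exact ((hg.const_mul s).mul (hasDerivAt_const_div_add_self (3 * t) hx)).congr_deriv
    (by unfold radialProfileDerivSnd; ring)

theorem hasDerivAt_radialProfileDerivSnd (s c t : ℝ) {x : ℝ} (hx : x ≠ 0) :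
    HasDerivAt (radialProfileDerivSnd s c t)
      (s * (2 * c * (3 * t / x + x) + 4 * c * x * (1 - 3 * t / x ^ 2)
        + (1 + c * (3 * t + x ^ 2)) * (6 * t / x ^ 3))) x := by
  have hg := hasDerivAt_one_add_mul_add_sq c (3 * t) x
  have hcx : HasDerivAt (fun y => 2 * c * y) (2 * c) x := by
    simpa using (hasDerivAt_id x).const_mul (2 * c)
  exact (((hcx.mul (hasDerivAt_const_div_add_self (3 * t) hx)).add
    (hg.mul (hasDerivAt_one_sub_const_div_sq (3 * t) hx))).const_mul s).congr_deriv (by ring)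

theorem radialProfile_heat_identity (s c t r : ℝ) (hr : r ≠ 0) :
    2 * radialProfile s c (t, r) *
        (3 * s * (c * (3 * t / r + r) + (1 + c * (3 * t + r ^ 2)) / r)
          - s * (2 * c * (3 * t / r + r) + 4 * c * r * (1 - 3 * t / r ^ 2)
            + (1 + c * (3 * t + r ^ 2)) * (6 * t / r ^ 3))
          - 3 / 2 * r⁻¹ * radialProfileDerivSnd s c t r)
      + radialProfileDerivSnd s c t r ^ 2 = 4 * s ^ 2 := by
  unfold radialProfile radialProfileDerivSnd
  field_simp
  ring

theorem exact_solution_sqrt_general (k c e : ℝ) (hk : 0 < k) (he : e = 1 ∨ e = -1)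
    (D : Set (ℝ × ℝ))
    (hDsub : D ⊆ {p : ℝ × ℝ | 0 < p.2 ∧
      0 < e * Real.sqrt k * (1 + c * (3 * p.1 + p.2 ^ 2)) * (3 * p.1 / p.2 + p.2)}) :
    ∀ p ∈ D,
      0 < (fun p : ℝ × ℝ =>
          (e * Real.sqrt k * (1 + c * (3 * p.1 + p.2 ^ 2))
            * (3 * p.1 / p.2 + p.2)) ^ ((1 : ℝ) / 2)) p ∧
      HeatEqM3 k (fun p : ℝ × ℝ =>
          (e * Real.sqrt k * (1 + c * (3 * p.1 + p.2 ^ 2))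
            * (3 * p.1 / p.2 + p.2)) ^ ((1 : ℝ) / 2)) p := by
  rintro ⟨t, r⟩ hp
  obtain ⟨hr, hw⟩ := hDsub hp
  have hs : (e * Real.sqrt k) ^ 2 = k := by
    rw [mul_pow, Real.sq_sqrt hk.le]
    rcases he with rfl | rfl <;> norm_num
  refine ⟨Real.rpow_pos_of_pos hw _, ?_⟩
  refine heatEqM3_rpow_half (w := radialProfile (e * Real.sqrt k) c)
    (wr := radialProfileDerivSnd (e * Real.sqrt k) c t)
    (hasDerivAt_radialProfile_fst _ c t r) ?_
    (hasDerivAt_radialProfileDerivSnd _ c t hr.ne') hw ?_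
  · filter_upwards [lt_mem_nhds hr] with x hx
    exact hasDerivAt_radialProfile_snd _ c t hx.ne'
  · exact (radialProfile_heat_identity _ c t r hr.ne').trans (by rw [hs])

/-- the exact solution `u = w^(1/2)` with
`w(t,r) = ε √k (1 + c(3t + r²)) (3t/r + r)`, for `n = 5/2`, `q = -4`, `k > 0`. -/
theorem exact_solution_sqrt (k c e : ℝ) (hk : 0 < k) (he : e = 1 ∨ e = -1)
    (D : Set (ℝ × ℝ)) (hD : IsOpen D)
    (hDsub : D ⊆ {p : ℝ × ℝ | 0 < p.2 ∧
      0 < e * Real.sqrt k * (1 + c * (3 * p.1 + p.2 ^ 2)) * (3 * p.1 / p.2 + p.2)}) :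
    ∀ p ∈ D,
      0 < (fun p : ℝ × ℝ =>
          (e * Real.sqrt k * (1 + c * (3 * p.1 + p.2 ^ 2))
            * (3 * p.1 / p.2 + p.2)) ^ ((1 : ℝ) / 2)) p ∧
      HeatEqM3 k (fun p : ℝ × ℝ =>
          (e * Real.sqrt k * (1 + c * (3 * p.1 + p.2 ^ 2))
            * (3 * p.1 / p.2 + p.2)) ^ ((1 : ℝ) / 2)) p :=
  exact_solution_sqrt_general k c e hk he D hDsub
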